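/- arXiv:2604.22159 — 3 statements merged into one kernel-verified Lean document; each statement's English description precedes it below -/
import Mathlib

section
/- Let A, B be real n×n positive semidefinite matrices, and suppose A = LLᵀ and B = MMᵀ for real n×n matrices L, M. Then tr((A^{1/2} B A^{1/2})^{1/2}) = ‖Lᵀ M‖₊, and consequently the squared Bures–Wasserstein distance satisfies dist_BW²(A, B) = ‖L‖_F² + ‖M‖_F² − 2‖Lᵀ M‖₊. -/
open Matrix BigOperators Classical

/-- Squared Frobenius norm. -/
def frobSq {m n : Type*} [Fintype m] [Fintype n] (C : Matrix m n ℝ) : ℝ :=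
  ∑ i, ∑ j, (C i j) ^ 2

/-- Frobenius norm. -/
noncomputable def frobNorm {m n : Type*} [Fintype m] [Fintype n]
    (C : Matrix m n ℝ) : ℝ :=
  Real.sqrt (frobSq C)

/-- Square root of a positive semidefinite matrix (junk value `0` otherwise). -/
noncomputable def psdSqrt {n : Type*} [Fintype n] [DecidableEq n]
    (A : Matrix n n ℝ) : Matrix n n ℝ :=
  if h : A.PosSemidef then
    (h.1.eigenvectorUnitary : Matrix n n ℝ) * diagonal ((↑) ∘ (√·) ∘ h.1.eigenvalues) *
      (star h.1.eigenvectorUnitary : Matrix n n ℝ)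
  else 0

/-- Nuclear norm: `‖C‖₊ = tr((CᵀC)^{1/2})`, the sum of the singular values. -/
noncomputable def nuclearNorm {m n : Type*} [Fintype m] [Fintype n] [DecidableEq n]
    (C : Matrix m n ℝ) : ℝ :=
  (psdSqrt (Cᵀ * C)).trace

/-- Squared Bures–Wasserstein distance:
`dist_BW²(A,B) = tr A + tr B − 2 tr((A^{1/2} B A^{1/2})^{1/2})`. -/
noncomputable def distBWsq {n : Type*} [Fintype n] [DecidableEq n]
    (A B : Matrix n n ℝ) : ℝ :=
  A.trace + B.trace - 2 * (psdSqrt (psdSqrt A * B * psdSqrt A)).trace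

/-!
The square root `S` of `A = L Lᵀ` is symmetric with `S S = A`, so `S B S = (S M)(S M)ᵀ`.
For a square matrix `X`, `X Xᵀ` and `Xᵀ X` have the same characteristic polynomial, hence the
same eigenvalues and square roots of equal trace. Applied to `X = S M`, this turns
`tr (S B S)^{1/2}` into `tr (Mᵀ A M)^{1/2}`, and `Mᵀ A M = (Lᵀ M)ᵀ (Lᵀ M)`.
-/

section PsdSqrt

variable {n : Type*} [Fintype n] [DecidableEq n]

lemma psdSqrt_eq_cfc {A : Matrix n n ℝ} (hA : A.PosSemidef) : psdSqrt A = cfc Real.sqrt A := by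
  rw [psdSqrt, dif_pos hA, hA.1.cfc_eq, IsHermitian.cfc, Unitary.conjStarAlgAut_apply]
  rfl

lemma psdSqrt_mul_self {A : Matrix n n ℝ} (hA : A.PosSemidef) : psdSqrt A * psdSqrt A = A := by
  rw [psdSqrt_eq_cfc hA, ← cfc_mul Real.sqrt Real.sqrt A]
  conv_rhs => rw [← cfc_id' ℝ A hA.1.isSelfAdjoint]
  refine cfc_congr fun x hx => Real.mul_self_sqrt ?_
  rw [hA.1.spectrum_real_eq_range_eigenvalues] at hx
  obtain ⟨i, rfl⟩ := hx
  exact hA.eigenvalues_nonneg i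

lemma transpose_psdSqrt (A : Matrix n n ℝ) : (psdSqrt A)ᵀ = psdSqrt A := by
  by_cases hA : A.PosSemidef
  · rw [psdSqrt_eq_cfc hA, ← conjTranspose_eq_transpose_of_trivial]
    exact (cfc_predicate Real.sqrt A : IsSelfAdjoint _)
  · simp [psdSqrt, hA]

lemma trace_psdSqrt {A : Matrix n n ℝ} (hA : A.PosSemidef) :
    (psdSqrt A).trace = ∑ i, √(hA.1.eigenvalues i) := by
  rw [psdSqrt, dif_pos hA, trace_mul_cycle, Unitary.coe_star_mul_self, one_mul, trace_diagonal]
  rfl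

lemma trace_psdSqrt_eq_of_charpoly_eq {A B : Matrix n n ℝ} (hA : A.PosSemidef)
    (hB : B.PosSemidef) (h : A.charpoly = B.charpoly) :
    (psdSqrt A).trace = (psdSqrt B).trace := by
  rw [trace_psdSqrt hA, trace_psdSqrt hB, (hA.1.eigenvalues_eq_eigenvalues_iff hB.1).mpr h]

lemma trace_psdSqrt_mul_transpose_self (X : Matrix n n ℝ) :
    (psdSqrt (X * Xᵀ)).trace = nuclearNorm X := by
  refine trace_psdSqrt_eq_of_charpoly_eq ?_ ?_ (charpoly_mul_comm X Xᵀ)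
  · simpa using posSemidef_self_mul_conjTranspose X
  · simpa using posSemidef_conjTranspose_mul_self X

end PsdSqrt

lemma trace_mul_transpose_self {m n : Type*} [Fintype m] [Fintype n] (L : Matrix m n ℝ) :
    (L * Lᵀ).trace = frobSq L := by
  simp [trace, mul_apply, frobSq, sq]

theorem distBW_eq_cholesky_general (n : ℕ) (A B L M : Matrix (Fin n) (Fin n) ℝ)
    (hL : A = L * Lᵀ) (hM : B = M * Mᵀ) :
    (psdSqrt (psdSqrt A * B * psdSqrt A)).trace = nuclearNorm (Lᵀ * M) ∧
    distBWsq A B = frobSq L + frobSq M - 2 * nuclearNorm (Lᵀ * M) := by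
  have hA : A.PosSemidef := hL ▸ by simpa using posSemidef_self_mul_conjTranspose L
  set S := psdSqrt A
  have hSt : Sᵀ = S := transpose_psdSqrt A
  have hSS : S * S = A := psdSqrt_mul_self hA
  have hSBS : S * B * S = (S * M) * (S * M)ᵀ := by
    rw [hM, transpose_mul, hSt]
    simp only [mul_assoc]
  have hMAM : (S * M)ᵀ * (S * M) = (Lᵀ * M)ᵀ * (Lᵀ * M) := by
    calc (S * M)ᵀ * (S * M) = Mᵀ * (S * S) * M := by
          rw [transpose_mul, hSt]; simp only [mul_assoc]
      _ = (Lᵀ * M)ᵀ * (Lᵀ * M) := by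
          rw [hSS, hL, transpose_mul, transpose_transpose]; simp only [mul_assoc]
  have hfidelity : (psdSqrt (S * B * S)).trace = nuclearNorm (Lᵀ * M) := by
    rw [hSBS, trace_psdSqrt_mul_transpose_self, nuclearNorm, nuclearNorm, hMAM]
  refine ⟨hfidelity, ?_⟩
  rw [distBWsq, hfidelity, hL, hM, trace_mul_transpose_self, trace_mul_transpose_self]

/-- Bures–Wasserstein distance in terms of Cholesky-type factors:
`tr((A^{1/2}BA^{1/2})^{1/2}) = ‖LᵀM‖₊` and
`dist_BW²(A,B) = ‖L‖_F² + ‖M‖_F² − 2‖LᵀM‖₊`. -/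
theorem distBW_eq_cholesky (n : ℕ) (A B L M : Matrix (Fin n) (Fin n) ℝ)
    (hA : A.PosSemidef) (hB : B.PosSemidef)
    (hL : A = L * Lᵀ) (hM : B = M * Mᵀ) :
    (psdSqrt (psdSqrt A * B * psdSqrt A)).trace = nuclearNorm (Lᵀ * M) ∧
    distBWsq A B = frobSq L + frobSq M - 2 * nuclearNorm (Lᵀ * M) :=
  distBW_eq_cholesky_general n A B L M hL hM
end

section
/- For block lower triangular L, M ∈ ℝ^{Nd×Nd}, dist_AW²(L,M) ≥ ∑_{t=1}^N ( ‖L_{·,t}‖_F − ‖M_{·,t}‖_F )², where L_{·,t}, M_{·,t} are the t-th column blocks. In particular dist_AW(L,M)² ≥ 0. -/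
open Matrix BigOperators Classical

variable {N d : ℕ}

/-- `L` is block lower triangular: all `d×d` blocks `L_{s,t}` with `s < t` vanish. -/
def BlockLowerTri (L : Matrix (Fin N × Fin d) (Fin N × Fin d) ℝ) : Prop :=
  ∀ s t : Fin N, s < t → ∀ i j : Fin d, L (s, i) (t, j) = 0

/-- The `t`-th `d×d` diagonal block of a matrix. -/
def diagBlock (A : Matrix (Fin N × Fin d) (Fin N × Fin d) ℝ) (t : Fin N) :
    Matrix (Fin d) (Fin d) ℝ :=
  fun i j => A (t, i) (t, j)

/-- The `t`-th column block `L_{·,t} ∈ ℝ^{Nd×d}` of `L`. -/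
def colBlock (L : Matrix (Fin N × Fin d) (Fin N × Fin d) ℝ) (t : Fin N) :
    Matrix (Fin N × Fin d) (Fin d) ℝ :=
  fun p j => L p (t, j)

/-- Block diagonal matrix built from `d×d` blocks `Q₁, …, Q_N`. -/
def blockDiag (Q : Fin N → Matrix (Fin d) (Fin d) ℝ) :
    Matrix (Fin N × Fin d) (Fin N × Fin d) ℝ :=
  fun p q => if p.1 = q.1 then Q q.1 p.2 q.2 else 0

/-- Squared adapted Wasserstein pseudo-distance between Cholesky factors:
`dist_AW²(L,M) = ‖L‖_F² + ‖M‖_F² − 2 ∑_t ‖(LᵀM)_{t,t}‖₊`. -/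
noncomputable def distAWsq (L M : Matrix (Fin N × Fin d) (Fin N × Fin d) ℝ) : ℝ :=
  frobSq L + frobSq M - 2 * ∑ t : Fin N, nuclearNorm (diagBlock (Lᵀ * M) t)

/-- Adapted Wasserstein pseudo-distance. -/
noncomputable def distAW (L M : Matrix (Fin N × Fin d) (Fin N × Fin d) ℝ) : ℝ :=
  Real.sqrt (distAWsq L M)

/-!
Polar decomposition: `C = Aᵀ B` factors as `C = Q (CᵀC)^{1/2}` with `Q` a partial isometry, so
`‖C‖₊ = tr (Qᵀ C) = tr ((A Q)ᵀ B)`. Cauchy–Schwarz for the Frobenius inner product bounds this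
by `‖A Q‖_F ‖B‖_F`, and right multiplication by a partial isometry does not increase the
Frobenius norm. Since `dist_AW²(L, M)` is the sum over `t` of
`‖L_{·,t}‖_F² + ‖M_{·,t}‖_F² − 2 ‖L_{·,t}ᵀ M_{·,t}‖₊`, each term is at least
`(‖L_{·,t}‖_F − ‖M_{·,t}‖_F)²`.
-/

section Frobenius

variable {m n k : Type*} [Fintype m] [Fintype n] [Fintype k]

def IsPartialIsometry (Q : Matrix n k ℝ) : Prop :=
  Q * (Qᵀ * Q) = Q

lemma frobSq_nonneg (C : Matrix m n ℝ) : 0 ≤ frobSq C :=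
  Finset.sum_nonneg fun _ _ => Finset.sum_nonneg fun _ _ => sq_nonneg _

lemma sq_frobNorm (C : Matrix m n ℝ) : frobNorm C ^ 2 = frobSq C :=
  Real.sq_sqrt (frobSq_nonneg C)

lemma frobSq_eq_trace (C : Matrix m n ℝ) : frobSq C = (Cᵀ * C).trace := by
  simp only [frobSq, trace, diag, mul_apply, transpose_apply, sq]
  exact Finset.sum_comm

lemma frobSq_mul_eq_trace (A : Matrix m n ℝ) (X : Matrix n k ℝ) :
    frobSq (A * X) = (Aᵀ * A * (X * Xᵀ)).trace := by
  rw [frobSq_eq_trace, trace_mul_comm, transpose_mul, ← Matrix.mul_assoc, trace_mul_comm]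
  simp only [Matrix.mul_assoc]

lemma trace_transpose_mul_le_frobNorm_mul_frobNorm (A B : Matrix m n ℝ) :
    (Aᵀ * B).trace ≤ frobNorm A * frobNorm B := by
  have hsum (C : Matrix m n ℝ) : frobSq C = ∑ p : m × n, C p.1 p.2 ^ 2 :=
    (Fintype.sum_prod_type' _).symm
  have htrace : (Aᵀ * B).trace = ∑ p : m × n, A p.1 p.2 * B p.1 p.2 := by
    simp only [trace, diag, mul_apply, transpose_apply]
    exact Finset.sum_comm.trans (Fintype.sum_prod_type' fun i j => A i j * B i j).symm
  rw [htrace, frobNorm, frobNorm, hsum, hsum]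
  exact Real.sum_mul_le_sqrt_mul_sqrt _ _ _

lemma IsPartialIsometry.frobSq_mul_le [DecidableEq n] {Q : Matrix n k ℝ}
    (hQ : IsPartialIsometry Q) (A : Matrix m n ℝ) : frobSq (A * Q) ≤ frobSq A := by
  set P := Q * Qᵀ
  have hP : (1 - P) * (1 - P)ᵀ = 1 - P := by
    have hPP : P * P = P := by
      rw [show P * P = Q * (Qᵀ * Q) * Qᵀ by simp only [P, Matrix.mul_assoc], hQ]
    rw [transpose_sub, transpose_one, show Pᵀ = P by simp [P], sub_mul, mul_sub, mul_sub, hPP]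
    simp
  have hsplit : frobSq A = frobSq (A * Q) + frobSq (A * (1 - P)) := by
    rw [frobSq_mul_eq_trace, frobSq_mul_eq_trace, hP, ← trace_add, ← mul_add, add_sub_cancel,
      Matrix.mul_one, frobSq_eq_trace]
  linarith [frobSq_nonneg (A * (1 - P))]

end Frobenius

section Polar

variable {m n : Type*} [Fintype m] [Fintype n] [DecidableEq n]

lemma Matrix.IsHermitian.eq_eigenvectorUnitary_mul_diagonal_mul_transpose {A : Matrix n n ℝ}
    (hA : A.IsHermitian) :
    A = (hA.eigenvectorUnitary : Matrix n n ℝ) * diagonal hA.eigenvalues *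
      (hA.eigenvectorUnitary : Matrix n n ℝ)ᵀ := by
  conv_lhs => rw [hA.spectral_theorem]
  simp [star_eq_conjTranspose]

lemma psdSqrt_of_posSemidef {A : Matrix n n ℝ} (hA : A.PosSemidef) :
    psdSqrt A = (hA.1.eigenvectorUnitary : Matrix n n ℝ) *
      diagonal (fun j => √(hA.1.eigenvalues j)) * (hA.1.eigenvectorUnitary : Matrix n n ℝ)ᵀ := by
  rw [psdSqrt, dif_pos hA, star_eq_conjTranspose, conjTranspose_eq_transpose_of_trivial]
  rfl

lemma conj_diagonal_mul_conj_diagonal {U : Matrix n n ℝ} (hU : Uᵀ * U = 1) (a b : n → ℝ) :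
    U * diagonal a * Uᵀ * (U * diagonal b * Uᵀ) = U * diagonal (a * b) * Uᵀ := by
  simp only [Matrix.mul_assoc, ← Matrix.mul_assoc Uᵀ U, hU, Matrix.one_mul,
    ← Matrix.mul_assoc (diagonal a), diagonal_mul_diagonal]
  rfl

lemma exists_isPartialIsometry_trace_transpose_mul_eq_nuclearNorm (C : Matrix m n ℝ) :
    ∃ Q : Matrix m n ℝ, IsPartialIsometry Q ∧ (Qᵀ * C).trace = nuclearNorm C := by
  have hC : (Cᵀ * C).PosSemidef := by
    simpa using posSemidef_conjTranspose_mul_self C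
  set U : Matrix n n ℝ := (hC.1.eigenvectorUnitary : Matrix n n ℝ)
  set μ := hC.1.eigenvalues
  set σ : n → ℝ := fun j => √(μ j)
  have hU : Uᵀ * U = 1 := by
    simpa [star_eq_conjTranspose] using Unitary.coe_star_mul_self hC.1.eigenvectorUnitary
  have hCC : Cᵀ * C = U * diagonal μ * Uᵀ :=
    hC.1.eq_eigenvectorUnitary_mul_diagonal_mul_transpose
  have hσμ : σ⁻¹ * μ = σ := by
    funext j
    calc (σ j)⁻¹ * μ j = (σ j)⁻¹ * σ j * σ j := by
          rw [mul_assoc, Real.mul_self_sqrt (hC.eigenvalues_nonneg j)]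
      _ = σ j := inv_mul_mul_self _
  have hσσ : σ⁻¹ * σ * σ⁻¹ = σ⁻¹ := funext fun j => by simpa using mul_inv_mul_cancel (σ j)⁻¹
  have hR : (U * diagonal σ⁻¹ * Uᵀ)ᵀ = U * diagonal σ⁻¹ * Uᵀ := by
    simp [Matrix.mul_assoc]
  -- `Q = C (CᵀC)^{+1/2}`, the pseudo-inverse coming for free from `(0 : ℝ)⁻¹ = 0`.
  refine ⟨C * (U * diagonal σ⁻¹ * Uᵀ), ?_, ?_⟩
  · have hQQ : (C * (U * diagonal σ⁻¹ * Uᵀ))ᵀ * (C * (U * diagonal σ⁻¹ * Uᵀ)) =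
        U * diagonal (σ * σ⁻¹) * Uᵀ := by
      rw [transpose_mul, hR, Matrix.mul_assoc, ← Matrix.mul_assoc Cᵀ, hCC,
        conj_diagonal_mul_conj_diagonal hU, conj_diagonal_mul_conj_diagonal hU, ← mul_assoc, hσμ]
    rw [IsPartialIsometry, hQQ, Matrix.mul_assoc, conj_diagonal_mul_conj_diagonal hU,
      ← mul_assoc, hσσ]
  · rw [transpose_mul, hR, Matrix.mul_assoc, hCC, conj_diagonal_mul_conj_diagonal hU, hσμ,
      nuclearNorm, psdSqrt_of_posSemidef hC]

lemma nuclearNorm_transpose_mul_le {k : Type*} [Fintype k] (A : Matrix m k ℝ)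
    (B : Matrix m n ℝ) : nuclearNorm (Aᵀ * B) ≤ frobNorm A * frobNorm B := by
  obtain ⟨Q, hQ, htrace⟩ := exists_isPartialIsometry_trace_transpose_mul_eq_nuclearNorm (Aᵀ * B)
  calc nuclearNorm (Aᵀ * B) = ((A * Q)ᵀ * B).trace := by
        rw [← htrace, transpose_mul, Matrix.mul_assoc]
    _ ≤ frobNorm (A * Q) * frobNorm B := trace_transpose_mul_le_frobNorm_mul_frobNorm _ _
    _ ≤ frobNorm A * frobNorm B := mul_le_mul_of_nonneg_right
        (Real.sqrt_le_sqrt (hQ.frobSq_mul_le A)) (Real.sqrt_nonneg _)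

lemma sq_frobNorm_sub_frobNorm_le (A B : Matrix m n ℝ) :
    (frobNorm A - frobNorm B) ^ 2 ≤ frobSq A + frobSq B - 2 * nuclearNorm (Aᵀ * B) := by
  have := nuclearNorm_transpose_mul_le A B
  rw [← sq_frobNorm A, ← sq_frobNorm B]
  linarith

end Polar

lemma diagBlock_transpose_mul (L M : Matrix (Fin N × Fin d) (Fin N × Fin d) ℝ) (t : Fin N) :
    diagBlock (Lᵀ * M) t = (colBlock L t)ᵀ * colBlock M t :=
  rfl

lemma frobSq_eq_sum_frobSq_colBlock (L : Matrix (Fin N × Fin d) (Fin N × Fin d) ℝ) :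
    frobSq L = ∑ t : Fin N, frobSq (colBlock L t) := by
  simp only [frobSq, colBlock]
  rw [Finset.sum_comm, Fintype.sum_prod_type]
  exact Finset.sum_congr rfl fun t _ => Finset.sum_comm

lemma distAWsq_eq_sum_colBlock (L M : Matrix (Fin N × Fin d) (Fin N × Fin d) ℝ) :
    distAWsq L M = ∑ t : Fin N, (frobSq (colBlock L t) + frobSq (colBlock M t) -
      2 * nuclearNorm ((colBlock L t)ᵀ * colBlock M t)) := by
  simp only [distAWsq, frobSq_eq_sum_frobSq_colBlock L, frobSq_eq_sum_frobSq_colBlock M,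
    diagBlock_transpose_mul, Finset.mul_sum, Finset.sum_add_distrib, Finset.sum_sub_distrib]

theorem distAWsq_lower_bound_general (N d : ℕ)
    (L M : Matrix (Fin N × Fin d) (Fin N × Fin d) ℝ) :
    (∑ t : Fin N, (frobNorm (colBlock L t) - frobNorm (colBlock M t)) ^ 2)
        ≤ distAWsq L M ∧
    0 ≤ distAWsq L M := by
  have hbound : (∑ t : Fin N, (frobNorm (colBlock L t) - frobNorm (colBlock M t)) ^ 2)
      ≤ distAWsq L M := by
    rw [distAWsq_eq_sum_colBlock]
    exact Finset.sum_le_sum fun t _ => sq_frobNorm_sub_frobNorm_le _ _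
  exact ⟨hbound, (Finset.sum_nonneg fun t _ => sq_nonneg _).trans hbound⟩

/-- Lower bound: `dist_AW²(L,M) ≥ ∑_t (‖L_{·,t}‖_F − ‖M_{·,t}‖_F)²`; in
particular `dist_AW²(L,M) ≥ 0`. -/
theorem distAWsq_lower_bound (N d : ℕ)
    (L M : Matrix (Fin N × Fin d) (Fin N × Fin d) ℝ)
    (hL : BlockLowerTri L) (hM : BlockLowerTri M) :
    (∑ t : Fin N, (frobNorm (colBlock L t) - frobNorm (colBlock M t)) ^ 2)
        ≤ distAWsq L M ∧
    0 ≤ distAWsq L M :=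
  distAWsq_lower_bound_general N d L M
end

section
/- For every real n×n positive semidefinite matrix A there exists a unique lower triangular matrix L with nonnegative diagonal entries such that LLᵀ = A and, for every index i with L_{ii} = 0, the entire i-th column of L is zero. -/
open Matrix BigOperators

/-!
Write `A` as the Gram matrix of vectors `v i`. The Gram–Schmidt vectors `g i` of `v`, normalized and
completed to an orthonormal basis `b`, make the coordinate matrix `L i j = ⟪b j, v i⟫` lower
triangular with diagonal `L i i = ‖g i‖ ≥ 0`; if `g i = 0`, then `b i` is orthogonal to every `v j`,
so the whole `i`-th column vanishes.

For uniqueness, go column by column: by triangularity, entry `(p, i)` of `L Lᵀ` is `L p i * L i i`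
plus terms from earlier columns, so the earlier columns and `A` determine `L p i * L i i`. Taking
`p = i` fixes `L i i ≥ 0`; then the column is either zero or obtained by dividing by `L i i`.
-/

open Finset InnerProductSpace

section GramSchmidt

variable {𝕜 E ι : Type*} [RCLike 𝕜] [NormedAddCommGroup E] [InnerProductSpace 𝕜 E]
  [LinearOrder ι] [LocallyFiniteOrderBot ι] [WellFoundedLT ι]

theorem inner_gramSchmidt_self (f : ι → E) (i : ι) :
    inner 𝕜 (gramSchmidt 𝕜 f i) (f i) = (‖gramSchmidt 𝕜 f i‖ ^ 2 : 𝕜) := by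
  conv_lhs => rw [gramSchmidt_def'' 𝕜 f i]
  rw [inner_add_right, inner_sum, sum_eq_zero fun j hj => ?_, add_zero, inner_self_eq_norm_sq_to_K]
  rw [inner_smul_right, gramSchmidt_orthogonal 𝕜 f (mem_Iio.mp hj).ne', mul_zero]

theorem gramSchmidtNormed_eq_zero_iff {f : ι → E} {i : ι} :
    gramSchmidtNormed 𝕜 f i = 0 ↔ gramSchmidt 𝕜 f i = 0 := by
  simp [gramSchmidtNormed, smul_eq_zero]

theorem inner_gramSchmidtOrthonormalBasis_self [Fintype ι] [FiniteDimensional 𝕜 E]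
    (h : Module.finrank 𝕜 E = Fintype.card ι) (f : ι → E) (i : ι) :
    inner 𝕜 (gramSchmidtOrthonormalBasis h f i) (f i) = (‖gramSchmidt 𝕜 f i‖ : 𝕜) := by
  by_cases hi : gramSchmidtNormed 𝕜 f i = 0
  · rw [inner_gramSchmidtOrthonormalBasis_eq_zero h hi, gramSchmidtNormed_eq_zero_iff.mp hi,
      norm_zero, RCLike.ofReal_zero]
  · have hg : (‖gramSchmidt 𝕜 f i‖ : 𝕜) ≠ 0 := by
      simpa using gramSchmidtNormed_eq_zero_iff.not.mp hi
    rw [gramSchmidtOrthonormalBasis_apply h hi, gramSchmidtNormed, inner_smul_left,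
      inner_gramSchmidt_self, map_inv₀, RCLike.conj_ofReal, sq, inv_mul_cancel_left₀ hg]

end GramSchmidt

open scoped ComplexOrder MatrixOrder in
theorem Matrix.PosSemidef.exists_eq_gram {𝕜 n : Type*} [RCLike 𝕜] [Fintype n] [DecidableEq n]
    {A : Matrix n n 𝕜} (hA : A.PosSemidef) : ∃ v : n → EuclideanSpace 𝕜 n, gram 𝕜 v = A := by
  obtain ⟨B, rfl⟩ := CStarAlgebra.nonneg_iff_eq_star_mul_self.mp hA.nonneg
  refine ⟨fun i => WithLp.toLp 2 (fun k => B k i), ?_⟩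
  ext i j
  simp [gram_apply, PiLp.inner_apply, mul_apply, mul_comm]

namespace Matrix

variable {ι R : Type*} [Fintype ι] [LinearOrder ι]

structure IsMinimalCholeskyFactor [Semiring R] [PartialOrder R] (L A : Matrix ι ι R) : Prop where
  isLowerTriangular : L.IsLowerTriangular
  diag_nonneg : ∀ i, 0 ≤ L i i
  mul_transpose_self : L * Lᵀ = A
  col_eq_zero_of_diag_eq_zero : ∀ i, L i i = 0 → ∀ j, L j i = 0

theorem IsMinimalCholeskyFactor.unique [Field R] [LinearOrder R] [IsStrictOrderedRing R]
    {L M A : Matrix ι ι R} (hL : L.IsMinimalCholeskyFactor A) (hM : M.IsMinimalCholeskyFactor A) :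
    L = M := by
  suffices ∀ i j, L j i = M j i from Matrix.ext fun j i => this i j
  intro i
  induction i using WellFoundedLT.induction with
  | _ i IH =>
  have hcol : ∀ p, L p i * L i i = M p i * M i i := by
    intro p
    have h := congrFun₂ (hL.mul_transpose_self.trans hM.mul_transpose_self.symm) p i
    simp only [mul_apply, transpose_apply] at h
    rw [← add_sum_erase _ _ (mem_univ i), ← add_sum_erase _ _ (mem_univ i),
      sum_congr rfl fun k hk => ?_] at h
    · exact add_right_cancel h
    rcases (ne_of_mem_erase hk).lt_or_gt with hki | hik
    · rw [IH k hki p, IH k hki i]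
    · rw [hL.isLowerTriangular hik, hM.isLowerTriangular hik, mul_zero, mul_zero]
  have hdiag : L i i = M i i :=
    (mul_self_inj_of_nonneg (hL.diag_nonneg i) (hM.diag_nonneg i)).mp (hcol i)
  intro p
  by_cases hi : L i i = 0
  · rw [hL.col_eq_zero_of_diag_eq_zero i hi, hM.col_eq_zero_of_diag_eq_zero i (hdiag ▸ hi)]
  · exact mul_right_cancel₀ hi (hdiag ▸ hcol p)

theorem isMinimalCholeskyFactor_gram [LocallyFiniteOrderBot ι] {E : Type*} [NormedAddCommGroup E]
    [InnerProductSpace ℝ E] [FiniteDimensional ℝ E] (h : Module.finrank ℝ E = Fintype.card ι)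
    (v : ι → E) :
    (of fun i j => (gramSchmidtOrthonormalBasis h v).repr (v i) j).IsMinimalCholeskyFactor
      (gram ℝ v) := by
  set b := gramSchmidtOrthonormalBasis h v
  have hdiag (i : ι) : b.repr (v i) i = ‖gramSchmidt ℝ v i‖ := by
    rw [b.repr_apply_apply, inner_gramSchmidtOrthonormalBasis_self, RCLike.ofReal_real_eq_id, id]
  refine ⟨fun i j hij => gramSchmidtOrthonormalBasis_inv_triangular' h v hij,
    fun i => (norm_nonneg _).trans_eq (hdiag i).symm, ?_, fun i hi j => ?_⟩
  · rw [gram_eq_conjTranspose_mul b, conjTranspose_eq_transpose_of_trivial]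
    rfl
  · rw [of_apply, hdiag, norm_eq_zero, ← gramSchmidtNormed_eq_zero_iff (𝕜 := ℝ)] at hi
    rw [of_apply, b.repr_apply_apply]
    exact inner_gramSchmidtOrthonormalBasis_eq_zero h hi j

theorem PosSemidef.exists_isMinimalCholeskyFactor [LocallyFiniteOrderBot ι] {A : Matrix ι ι ℝ}
    (hA : A.PosSemidef) : ∃ L : Matrix ι ι ℝ, L.IsMinimalCholeskyFactor A := by
  obtain ⟨v, rfl⟩ := hA.exists_eq_gram
  exact ⟨_, isMinimalCholeskyFactor_gram finrank_euclideanSpace v⟩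

end Matrix

/-- Minimal Cholesky factor: every real positive semidefinite matrix `A` has a
unique lower triangular factor `L` with nonnegative diagonal such that
`LLᵀ = A` and the `i`-th column of `L` vanishes whenever `L i i = 0`. -/
theorem exists_unique_minimal_cholesky (n : ℕ) (A : Matrix (Fin n) (Fin n) ℝ)
    (hA : A.PosSemidef) :
    ∃! L : Matrix (Fin n) (Fin n) ℝ,
      (∀ i j : Fin n, i < j → L i j = 0) ∧
      (∀ i : Fin n, 0 ≤ L i i) ∧
      L * Lᵀ = A ∧
      (∀ i : Fin n, L i i = 0 → ∀ j : Fin n, L j i = 0) := by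
  obtain ⟨L, hL⟩ := hA.exists_isMinimalCholeskyFactor
  refine ⟨L, ⟨fun i j hij => hL.isLowerTriangular hij, hL.diag_nonneg, hL.mul_transpose_self,
    hL.col_eq_zero_of_diag_eq_zero⟩, ?_⟩
  rintro M ⟨hlower, hdiag, hmul, hcol⟩
  exact IsMinimalCholeskyFactor.unique ⟨fun i j hij => hlower i j hij, hdiag, hmul, hcol⟩ hL
end
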